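/- arXiv:2507.16232 — 7 statements merged into one kernel-verified Lean document; each statement's English description precedes it below -/
import Mathlib

section
/- If the enveloping semigroup E(X) of a flow (X,T) consists entirely of homeomorphisms of X (i.e., is a group of homeomorphisms), then the enveloping semigroup E(E(X)) of the induced flow (E(X),T) also consists of homeomorphisms. -/
open Filter Set Topology Uniformity

/-!
Every `q ∈ E(E(X))` is left composition `p ↦ q(id) ∘ p`: this identity is a closed condition on
`q` and holds for the translations. So it suffices that `E(X)` is a group. For a homeomorphism
`p ∈ E(X)`, the closure of `{p^[n + 1]}` is a compact semigroup of injective maps; its idempotent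
(Ellis–Numakura) is therefore `id`, and `p⁻¹ = lim p⁻¹ ∘ p^[n + 1] = lim p^[n]` lies in `E(X)`.
Then left composition with `q(id)` has the inverse left composition with `q(id)⁻¹`.
-/

/-- The enveloping semigroup of the flow: the pointwise closure of the translation
maps `x ↦ t • x` inside `X → X` (with the product topology). -/
def envSemigroup (T X : Type*) [SMul T X] [TopologicalSpace X] : Set (X → X) :=
  closure (Set.range fun t : T => fun x : X => t • x)

section EnvAction

variable (T X : Type*) [Monoid T] [TopologicalSpace X] [MulAction T X]
  [ContinuousConstSMul T X]

lemma smul_mem_envSemigroup (t : T) {p : X → X} (hp : p ∈ envSemigroup T X) :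
    t • p ∈ envSemigroup T X := by
  have hc : Continuous fun q : X → X => t • q :=
    continuous_pi fun x => (continuous_const_smul t).comp (continuous_apply x)
  refine map_mem_closure hc hp ?_
  rintro _ ⟨s, rfl⟩
  exact ⟨t * s, by funext x; simp [mul_smul]⟩

/-- `T` acts on the enveloping semigroup by left composition `t • p = π^t ∘ p`. -/
instance : MulAction T (envSemigroup T X) where
  smul t p := ⟨t • (p : X → X), smul_mem_envSemigroup T X t p.2⟩
  one_smul p := Subtype.ext (one_smul T (p : X → X))
  mul_smul a b p := Subtype.ext (mul_smul a b (p : X → X))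

instance : ContinuousConstSMul T (envSemigroup T X) := by
  refine ⟨fun t => continuous_induced_rng.2 ?_⟩
  have h : (fun p : envSemigroup T X => ((t • p : envSemigroup T X) : X → X))
      = fun p : envSemigroup T X => t • (p : X → X) := rfl
  show Continuous fun p : envSemigroup T X => ((t • p : envSemigroup T X) : X → X)
  rw [h]
  exact continuous_pi fun x => (continuous_const_smul t).comp
    ((continuous_apply x).comp continuous_subtype_val)

end EnvAction

section IterateClosure

variable {X : Type*} [TopologicalSpace X]

lemma comp_mem_closure_range_iterate {p a b : X → X}
    (ha : a ∈ closure (range fun n : ℕ => p^[n + 1])) (ha_cont : Continuous a)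
    (hb : b ∈ closure (range fun n : ℕ => p^[n + 1])) :
    a ∘ b ∈ closure (range fun n : ℕ => p^[n + 1]) := by
  have comp_iterate_mem (n : ℕ) : a ∘ p^[n + 1] ∈ closure (range fun n : ℕ => p^[n + 1]) := by
    refine map_mem_closure (f := (· ∘ p^[n + 1])) (Pi.continuous_precomp _) ha ?_
    rintro _ ⟨m, rfl⟩
    exact ⟨m + 1 + n, Function.iterate_add p (m + 1) (n + 1)⟩
  simpa only [closure_closure] using
    map_mem_closure (Pi.continuous_postcomp ha_cont) hb (range_subset_iff.2 comp_iterate_mem)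

lemma id_mem_of_isCompact_of_injective [T2Space X] {S : Set (X → X)} (hne : S.Nonempty)
    (hS : IsCompact S) (hcomp : ∀ a ∈ S, ∀ b ∈ S, a ∘ b ∈ S)
    (hinj : ∀ a ∈ S, Function.Injective a) : id ∈ S := by
  obtain ⟨e, heS, he⟩ := @exists_idempotent_in_compact_subsemigroup (Function.End X) _
    Pi.topologicalSpace (inferInstanceAs (T2Space (X → X)))
    (fun r => Pi.continuous_precomp r) S hne hS hcomp
  have : (e : X → X) = id := funext fun x => hinj e heS (congrFun he x)
  exact this ▸ heS

end IterateClosure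

section EnvSemigroup

variable {T X : Type*} [Monoid T] [TopologicalSpace X] [MulAction T X]

lemma isClosed_envSemigroup : IsClosed (envSemigroup T X) := isClosed_closure

lemma id_mem_envSemigroup : (id : X → X) ∈ envSemigroup T X :=
  subset_closure ⟨1, funext fun x => one_smul T x⟩

variable [ContinuousConstSMul T X]

lemma comp_mem_envSemigroup {p q : X → X} (hp : p ∈ envSemigroup T X)
    (hq : q ∈ envSemigroup T X) : q ∘ p ∈ envSemigroup T X := by
  rw [← isClosed_envSemigroup.closure_eq]
  refine map_mem_closure (f := (· ∘ p)) (Pi.continuous_precomp p) hq ?_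
  rintro _ ⟨t, rfl⟩
  exact smul_mem_envSemigroup T X t hp

lemma iterate_mem_envSemigroup {p : X → X} (hp : p ∈ envSemigroup T X) (n : ℕ) :
    p^[n] ∈ envSemigroup T X := by
  induction n with
  | zero => exact id_mem_envSemigroup
  | succ n ih => exact Function.iterate_succ' p n ▸ comp_mem_envSemigroup ih hp

lemma symm_mem_envSemigroup [CompactSpace X] [T2Space X]
    (h : ∀ p ∈ envSemigroup T X, IsHomeomorph p) {e : X ≃ₜ X} (he : ⇑e ∈ envSemigroup T X) :
    ⇑e.symm ∈ envSemigroup T X := by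
  set S := closure (range fun n : ℕ => (⇑e)^[n + 1])
  have hSE : S ⊆ envSemigroup T X := closure_minimal
    (range_subset_iff.2 fun n => iterate_mem_envSemigroup he (n + 1)) isClosed_envSemigroup
  have hid : id ∈ S := id_mem_of_isCompact_of_injective ⟨_, subset_closure (mem_range_self 0)⟩
    isClosed_closure.isCompact
    (fun a ha _ hb => comp_mem_closure_range_iterate ha (h a (hSE ha)).continuous hb)
    (fun a ha => (h a (hSE ha)).injective)
  have hmaps : MapsTo (⇑e.symm ∘ ·) (range fun n : ℕ => (⇑e)^[n + 1]) (envSemigroup T X) := by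
    rintro _ ⟨n, rfl⟩
    simp only [Function.iterate_succ', ← Function.comp_assoc, e.symm_comp_self,
      Function.id_comp]
    exact iterate_mem_envSemigroup he n
  simpa only [Function.comp_id, isClosed_envSemigroup.closure_eq] using
    map_mem_closure (Pi.continuous_postcomp e.symm.continuous) hid hmaps

lemma coe_apply_eq_comp_of_mem_envSemigroup [T2Space X]
    {q : envSemigroup T X → envSemigroup T X} (hq : q ∈ envSemigroup T (envSemigroup T X))
    (p : envSemigroup T X) :
    (q p : X → X) = (q ⟨id, id_mem_envSemigroup⟩ : X → X) ∘ (p : X → X) := by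
  let idE : envSemigroup T X := ⟨id, id_mem_envSemigroup⟩
  have hclosed : IsClosed
      {f : envSemigroup T X → envSemigroup T X | (f p : X → X) = (f idE : X → X) ∘ p} :=
    isClosed_eq (continuous_subtype_val.comp (continuous_apply p))
      ((Pi.continuous_precomp p.1).comp (continuous_subtype_val.comp (continuous_apply idE)))
  refine closure_minimal ?_ hclosed hq
  rintro _ ⟨t, rfl⟩
  rfl

lemma isHomeomorph_comp_left_envSemigroup {e : X ≃ₜ X} (he : ⇑e ∈ envSemigroup T X)
    (he_symm : ⇑e.symm ∈ envSemigroup T X) :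
    IsHomeomorph fun p : envSemigroup T X =>
      (⟨⇑e ∘ p.1, comp_mem_envSemigroup p.2 he⟩ : envSemigroup T X) := by
  have mem_iff (p : X → X) : p ∈ envSemigroup T X ↔ e ∘ p ∈ envSemigroup T X :=
    ⟨(comp_mem_envSemigroup · he), fun hp => by
      simpa only [← Function.comp_assoc, e.symm_comp_self, Function.id_comp] using
        comp_mem_envSemigroup hp he_symm⟩
  exact ((Homeomorph.piCongrRight fun _ : X => e).subtype mem_iff).isHomeomorph

end EnvSemigroup

theorem env_env_homeomorphisms_general {T X : Type*} [Group T] [TopologicalSpace T]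
    [UniformSpace X] [CompactSpace X] [T2Space X]
    [MulAction T X] [ContinuousSMul T X]
    (h : ∀ p ∈ envSemigroup T X, IsHomeomorph p) :
    ∀ q ∈ envSemigroup T (envSemigroup T X),
      IsHomeomorph (q : (envSemigroup T X) → (envSemigroup T X)) := by
  intro q hq
  set r := q ⟨id, id_mem_envSemigroup⟩
  obtain ⟨e, hre⟩ := isHomeomorph_iff_exists_homeomorph.mp (h r r.2)
  have he : ⇑e ∈ envSemigroup T X := hre ▸ r.2
  convert isHomeomorph_comp_left_envSemigroup he (symm_mem_envSemigroup h he) with p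
  rw [coe_apply_eq_comp_of_mem_envSemigroup hq p, hre]

/-- If the enveloping semigroup `E(X)` consists entirely of homeomorphisms of `X`,
then the enveloping semigroup `E(E(X))` of the induced flow `(E(X), T)` also
consists entirely of homeomorphisms. -/
theorem env_env_homeomorphisms {T X : Type*} [Group T] [TopologicalSpace T]
    [IsTopologicalGroup T] [UniformSpace X] [CompactSpace X] [T2Space X]
    [MulAction T X] [ContinuousSMul T X]
    (h : ∀ p ∈ envSemigroup T X, IsHomeomorph p) :
    ∀ q ∈ envSemigroup T (envSemigroup T X),
      IsHomeomorph (q : (envSemigroup T X) → (envSemigroup T X)) :=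
  env_env_homeomorphisms_general h
end

section
/- If a flow (X,T) is equicontinuous, then the induced flow (E(X),T) on its enveloping semigroup is equicontinuous; conversely, if (X,T) is point transitive and (E(X),T) is equicontinuous, then (X,T) is equicontinuous. -/
open Filter Set Topology Uniformity

/-- A flow `(X, T)` is equicontinuous: for every entourage `V` there is an
entourage `U` such that `U`-close points stay `V`-close under all translations. -/
def Equicont (T X : Type*) [SMul T X] [UniformSpace X] : Prop :=
  ∀ V ∈ 𝓤 X, ∃ U ∈ 𝓤 X, ∀ x y : X, (x, y) ∈ U → ∀ t : T, (t • x, t • y) ∈ V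

/-- Equicontinuity of the subflow on an invariant subset `A` (with the relative
uniformity). -/
def EquicontOn (T : Type*) {X : Type*} [SMul T X] [UniformSpace X] (A : Set X) : Prop :=
  ∀ V ∈ 𝓤 X, ∃ U ∈ 𝓤 X, ∀ x ∈ A, ∀ y ∈ A, (x, y) ∈ U → ∀ t : T, (t • x, t • y) ∈ V

open Function

/-!
Equicontinuity of the flow is uniform equicontinuity of the family of translations `x ↦ t • x`.
The product uniformity on `X → X` is generated by finitely many coordinates, each controlled by
the equicontinuity of `X`. Conversely, evaluation at a point with dense orbit is a continuous
surjection `E(X) → X` (its image is compact and contains the orbit) intertwining the actions,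
and uniform equicontinuity descends along continuous surjections from compact spaces: the image
of a neighbourhood of the kernel relation is a neighbourhood of the diagonal, hence an entourage
of the compact Hausdorff space `X`.
-/

theorem equicont_iff_uniformEquicontinuous {T X : Type*} [SMul T X] [UniformSpace X] :
    Equicont T X ↔ UniformEquicontinuous fun t : T => ((t • ·) : X → X) := by
  simp only [Equicont, UniformEquicontinuous, Filter.eventually_iff_exists_mem, Prod.forall]

theorem UniformEquicontinuous.piMap {κ ι α β : Type*} [UniformSpace α] [UniformSpace β]
    {F : κ → β → α} (hF : UniformEquicontinuous F) :
    UniformEquicontinuous fun (k : κ) (f : ι → β) (i : ι) => F k (f i) := by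
  intro V hV
  rw [Pi.uniformity] at hV
  refine iInf_sets_induct hV (by simp) ?_
  rintro i V₁ V₂ ⟨W, hW, hWV₁⟩ hV₂
  have hcoord : ∀ᶠ fg : (ι → β) × (ι → β) in 𝓤 (ι → β), ∀ k, (F k (fg.1 i), F k (fg.2 i)) ∈ W :=
    Pi.uniformContinuous_proj (fun _ => β) i |>.eventually (hF W hW)
  filter_upwards [hcoord, hV₂] with fg h₁ h₂ k using ⟨hWV₁ (h₁ k), h₂ k⟩

theorem Equicont.pi {T X : Type*} (ι : Type*) [SMul T X] [UniformSpace X] (h : Equicont T X) :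
    Equicont T (ι → X) :=
  equicont_iff_uniformEquicontinuous.mpr (equicont_iff_uniformEquicontinuous.mp h).piMap

theorem Equicont.equicontOn {T X : Type*} [SMul T X] [UniformSpace X] (h : Equicont T X)
    (A : Set X) : EquicontOn T A := fun V hV =>
  (h V hV).imp fun _ ⟨hU, hUV⟩ => ⟨hU, fun x _ y _ => hUV x y⟩

theorem image_prodMap_mem_uniformity {α β : Type*} [TopologicalSpace α] [CompactSpace α]
    [UniformSpace β] [T2Space β] {π : α → β} (hπ : Continuous π) (hs : Surjective π)
    {W : Set (α × α)} (hW : W ∈ 𝓝ˢ {ab | π ab.1 = π ab.2}) : Prod.map π π '' W ∈ 𝓤 β := by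
  have := hs.compactSpace hπ
  have hclosed : IsClosed (Prod.map π π '' (interior W)ᶜ) :=
    (isOpen_interior.isClosed_compl.isCompact.image (hπ.prodMap hπ)).isClosed
  have hdisj : Disjoint (Prod.map π π '' (interior W)ᶜ) (diagonal β) := by
    rw [Set.disjoint_left]
    rintro _ ⟨ab, hab, rfl⟩ hdiag
    exact hab (subset_interior_iff_mem_nhdsSet.mpr hW hdiag)
  refine mem_of_superset (nhdsSet_diagonal_eq_uniformity (α := β) ▸
    hclosed.isOpen_compl.mem_nhdsSet.mpr hdisj.subset_compl_left) ?_
  rintro ⟨x, y⟩ hxy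
  obtain ⟨a, rfl⟩ := hs x
  obtain ⟨b, rfl⟩ := hs y
  by_contra hab
  exact hxy ⟨(a, b), fun hint => hab ⟨(a, b), interior_subset hint, rfl⟩, rfl⟩

theorem UniformEquicontinuous.of_comp_surjective {ι α β γ : Type*} [UniformSpace α]
    [CompactSpace α] [UniformSpace β] [T2Space β] [UniformSpace γ] {π : α → β}
    (hπ : Continuous π) (hs : Surjective π) {F : ι → β → γ}
    (h : UniformEquicontinuous fun i => F i ∘ π) : UniformEquicontinuous F := by
  intro V hV
  obtain ⟨V₁, hV₁, hV₁V⟩ := comp_mem_uniformity_sets hV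
  set U := {pq : α × α | ∀ i, (F i (π pq.1), F i (π pq.2)) ∈ V₁}
  have hU : U ∈ 𝓤 α := h V₁ hV₁
  -- If `(p, q)` is `U`-close to `(a, b)` with `π a = π b`, then `F i (π a)` links
  -- `F i (π p)` to `F i (π q)` through `V₁ ○ V₁`.
  have hker : {pq : α × α | ∀ i, (F i (π pq.1), F i (π pq.2)) ∈ V} ∈ 𝓝ˢ {ab | π ab.1 = π ab.2} := by
    refine mem_nhdsSet_iff_forall.mpr fun ⟨a, b⟩ hab => ?_
    filter_upwards [prod_mem_nhds (mem_nhds_right a hU) (mem_nhds_left b hU)]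
      with ⟨p, q⟩ ⟨hpa, hbq⟩ i
    exact hV₁V ⟨F i (π b), (congrArg (F i) hab : F i (π a) = F i (π b)) ▸ hpa i, hbq i⟩
  filter_upwards [image_prodMap_mem_uniformity hπ hs hker]
  rintro _ ⟨⟨p, q⟩, hpq, rfl⟩
  exact hpq

theorem isCompact_envSemigroup (T X : Type*) [SMul T X] [TopologicalSpace X] [CompactSpace X] :
    IsCompact (envSemigroup T X) :=
  isClosed_closure.isCompact

theorem surjective_eval_envSemigroup {T X : Type*} [SMul T X] [TopologicalSpace X]
    [CompactSpace X] [T2Space X] {x₀ : X} (hx₀ : Dense (range fun t : T => t • x₀)) :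
    Surjective fun p : envSemigroup T X => p.1 x₀ := by
  have hclosed : IsClosed ((fun p : X → X => p x₀) '' envSemigroup T X) :=
    ((isCompact_envSemigroup T X).image (continuous_apply x₀)).isClosed
  have horbit : range (fun t : T => t • x₀) ⊆ (fun p : X → X => p x₀) '' envSemigroup T X := by
    rintro _ ⟨t, rfl⟩
    exact ⟨_, subset_closure ⟨t, rfl⟩, rfl⟩
  intro x
  obtain ⟨p, hp, hpx⟩ := hclosed.closure_subset_iff.mpr horbit (hx₀ x)
  exact ⟨⟨p, hp⟩, hpx⟩

theorem EquicontOn.uniformEquicontinuous_eval {T X : Type*} [SMul T X] [UniformSpace X]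
    {E : Set (X → X)} (h : EquicontOn T E) (x₀ : X) :
    UniformEquicontinuous fun (t : T) (p : E) => t • p.1 x₀ := by
  intro V hV
  obtain ⟨U, hU, hUV⟩ := h _ (Pi.uniformContinuous_proj (fun _ => X) x₀ hV)
  rw [uniformity_subtype]
  filter_upwards [preimage_mem_comap hU] with ⟨p, q⟩ hpq t using hUV p p.2 q q.2 hpq t

theorem equicont_env_of_equicont_general {T X : Type*} [Group T] [UniformSpace X] [CompactSpace X]
    [T2Space X] [MulAction T X] :
    (Equicont T X → EquicontOn T (envSemigroup T X)) ∧
      ((∃ x₀ : X, Dense (Set.range fun t : T => t • x₀)) →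
        EquicontOn T (envSemigroup T X) → Equicont T X) := by
  refine ⟨fun h => (h.pi X).equicontOn _, ?_⟩
  rintro ⟨x₀, hx₀⟩ hE
  have := isCompact_iff_compactSpace.mp (isCompact_envSemigroup T X)
  exact equicont_iff_uniformEquicontinuous.mpr <|
    (hE.uniformEquicontinuous_eval x₀).of_comp_surjective
      ((continuous_apply x₀).comp continuous_subtype_val) (surjective_eval_envSemigroup hx₀)

/-- If `(X, T)` is equicontinuous then the induced flow `(E(X), T)` (with `E(X) ⊆ X → X`
carrying the pointwise uniformity, `T` acting by left composition) is equicontinuous;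
conversely, if `(X, T)` is point transitive and `(E(X), T)` is equicontinuous,
then `(X, T)` is equicontinuous. -/
theorem equicont_env_of_equicont {T X : Type*} [Group T] [TopologicalSpace T]
    [IsTopologicalGroup T] [UniformSpace X] [CompactSpace X] [T2Space X]
    [MulAction T X] [ContinuousSMul T X] :
    (Equicont T X → EquicontOn T (envSemigroup T X)) ∧
      ((∃ x₀ : X, Dense (Set.range fun t : T => t • x₀)) →
        EquicontOn T (envSemigroup T X) → Equicont T X) :=
  equicont_env_of_equicont_general
end

section
/- For any flow (X,T), the flow (E(X),T) is isomorphic (conjugate via a T-equivariant homeomorphism) to the flow (E(E(X)),T). -/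
open Filter Set Topology Uniformity

/-!
The map `p ↦ (q ↦ p ∘ q)` is continuous on `E(X)` and sends `π^t` to `π̂^t`; since the `π^t` are
dense in `E(X)`, it maps `E(X)` into `E(E(X))`, and it is equivariant because `T` acts by
left composition. Its inverse is evaluation at the identity `π^1`: every `f ∈ E(E(X))` satisfies
`f q = f π^1 ∘ q`, since this condition is closed (`X` is Hausdorff) and holds for each `π̂^t`.
-/

namespace envSemigroup

variable {T X : Type*} [Monoid T] [TopologicalSpace X] [MulAction T X]

variable (X) in
def translation (t : T) : envSemigroup T X :=
  ⟨fun x => t • x, subset_closure ⟨t, rfl⟩⟩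

variable (T X) in
theorem denseRange_translation : DenseRange (translation X : T → envSemigroup T X) :=
  Subtype.dense_iff.2 <| by rw [← range_comp]; exact subset_rfl

variable [ContinuousConstSMul T X]

theorem comp_mem {p q : X → X} (hp : p ∈ envSemigroup T X) (hq : q ∈ envSemigroup T X) :
    p ∘ q ∈ envSemigroup T X := by
  have hcomp : Continuous fun r : X → X => r ∘ q := continuous_pi fun x => continuous_apply (q x)
  have hmaps : MapsTo (· ∘ q) (range fun (t : T) (x : X) => t • x) (envSemigroup T X) := by
    rintro _ ⟨t, rfl⟩
    exact smul_mem_envSemigroup T X t hq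
  exact isClosed_closure.closure_subset (map_mem_closure (f := (· ∘ q)) hcomp hp hmaps)

def mulLeft (p q : envSemigroup T X) : envSemigroup T X :=
  ⟨p.1 ∘ q.1, comp_mem p.2 q.2⟩

theorem continuous_mulLeft : Continuous (mulLeft : envSemigroup T X → _ → _) :=
  continuous_pi fun q => continuous_induced_rng.2 <|
    continuous_pi fun x => (continuous_apply (q.1 x)).comp continuous_subtype_val

theorem mulLeft_translation (t : T) : mulLeft (translation X t) = fun q => t • q :=
  rfl

theorem mulLeft_translation_one (p : envSemigroup T X) : mulLeft p (translation X 1) = p :=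
  Subtype.ext <| funext fun x => congrArg p.1 (one_smul T x)

theorem mulLeft_mem (p : envSemigroup T X) : mulLeft p ∈ envSemigroup T (envSemigroup T X) :=
  map_mem_closure continuous_mulLeft (denseRange_translation T X p)
    (fun _ ⟨t, ht⟩ => ⟨t, ht ▸ (mulLeft_translation t).symm⟩)

theorem eq_mulLeft_of_mem [T2Space X] {f : envSemigroup T X → envSemigroup T X}
    (hf : f ∈ envSemigroup T (envSemigroup T X)) : f = mulLeft (f (translation X 1)) := by
  have hclosed : IsClosed {g : envSemigroup T X → envSemigroup T X |
      g = mulLeft (g (translation X 1))} :=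
    isClosed_eq continuous_id (continuous_mulLeft.comp (continuous_apply _))
  refine closure_minimal ?_ hclosed hf
  rintro _ ⟨t, rfl⟩
  exact funext fun q => Subtype.ext <| funext fun x => congrArg (t • ·) (one_smul T (q.1 x)).symm

variable (T X) in
def mulLeftHomeomorph [T2Space X] : envSemigroup T X ≃ₜ envSemigroup T (envSemigroup T X) where
  toFun p := ⟨mulLeft p, mulLeft_mem p⟩
  invFun f := f.1 (translation X 1)
  left_inv := mulLeft_translation_one
  right_inv f := Subtype.ext (eq_mulLeft_of_mem f.2).symm
  continuous_toFun := continuous_induced_rng.2 continuous_mulLeft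
  continuous_invFun := (continuous_apply _).comp continuous_subtype_val

theorem mulLeftHomeomorph_smul [T2Space X] (t : T) (p : envSemigroup T X) :
    mulLeftHomeomorph T X (t • p) = t • mulLeftHomeomorph T X p :=
  rfl

end envSemigroup

theorem env_iso_env_env_general {T X : Type*} [Group T] [TopologicalSpace T]
    [UniformSpace X] [T2Space X]
    [MulAction T X] [ContinuousSMul T X] :
    ∃ φ : (envSemigroup T X) ≃ₜ (envSemigroup T (envSemigroup T X)),
      ∀ (t : T) (p : envSemigroup T X), φ (t • p) = t • φ p :=
  ⟨envSemigroup.mulLeftHomeomorph T X, envSemigroup.mulLeftHomeomorph_smul⟩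

/-- For any flow `(X, T)`, the induced flow `(E(X), T)` is isomorphic to the flow
`(E(E(X)), T)`: there is a `T`-equivariant homeomorphism between them. -/
theorem env_iso_env_env {T X : Type*} [Group T] [TopologicalSpace T]
    [IsTopologicalGroup T] [UniformSpace X] [CompactSpace X] [T2Space X]
    [MulAction T X] [ContinuousSMul T X] :
    ∃ φ : (envSemigroup T X) ≃ₜ (envSemigroup T (envSemigroup T X)),
      ∀ (t : T) (p : envSemigroup T X), φ (t • p) = t • φ p :=
  env_iso_env_env_general
end

section
/- Let φ: (X,T) → (Y,T) be a factor map between flows on compact Hausdorff spaces such that φ is feeble open (the image of every nonempty open set has nonempty interior). If (Y,T) is sensitive, then (X,T) is sensitive. -/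
open Filter Set Topology Uniformity

/-- A flow is sensitive: there is an entourage `V` such that arbitrarily close to
any point there is a point separated from it by `V` under some translation. -/
def Sensitive (T X : Type*) [SMul T X] [UniformSpace X] : Prop :=
  ∃ V ∈ 𝓤 X, ∀ x : X, ∀ U ∈ 𝓤 X, ∃ y : X, (x, y) ∈ U ∧ ∃ t : T, (t • x, t • y) ∉ V

/- Sensitivity amounts to asking only for some pair of points in every nonempty open set
that some `t` pulls `V`-apart: given such a pair `x₀, x₁` near `x`, the triangle inequality
shows that `t • x` is far from `t • x₀` or from `t • x₁`. In this form sensitivity lifts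
along `φ`, since the image of a nonempty open set contains a nonempty open set of `Y`, and a
`V`-separated pair in it has preimages separated by the preimage of `V` under `φ × φ`, an
entourage by uniform continuity (automatic on a compact space). -/

theorem sensitive_iff_exists_separated_pair_of_isOpen (T X : Type*) [SMul T X]
    [UniformSpace X] :
    Sensitive T X ↔ ∃ V ∈ 𝓤 X, ∀ U : Set X, IsOpen U → U.Nonempty →
      ∃ x ∈ U, ∃ y ∈ U, ∃ t : T, (t • x, t • y) ∉ V := by
  constructor
  · rintro ⟨V, hV, hsens⟩
    refine ⟨V, hV, fun U hU ⟨x, hx⟩ => ?_⟩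
    obtain ⟨E, hE, hball⟩ := UniformSpace.mem_nhds_iff.mp (hU.mem_nhds hx)
    obtain ⟨y, hxy, t, ht⟩ := hsens x E hE
    exact ⟨x, hx, y, hball hxy, t, ht⟩
  · rintro ⟨V, hV, hpair⟩
    obtain ⟨W, hW, hWsymm, hWV⟩ := comp_symm_mem_uniformity_sets hV
    refine ⟨W, hW, fun x U hU => ?_⟩
    obtain ⟨O, hOball, hO, hxO⟩ := mem_nhds_iff.mp (UniformSpace.ball_mem_nhds x hU)
    obtain ⟨x₀, hx₀, x₁, hx₁, t, ht⟩ := hpair O hO ⟨x, hxO⟩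
    by_cases h₀ : (t • x, t • x₀) ∈ W
    · exact ⟨x₁, hOball hx₁, t, fun h₁ => ht (hWV ⟨t • x, hWsymm.symm _ _ h₀, h₁⟩)⟩
    · exact ⟨x₀, hOball hx₀, t, h₀⟩

theorem Sensitive.of_feebleOpen {T X Y : Type*} [SMul T X] [SMul T Y]
    [UniformSpace X] [UniformSpace Y] {φ : X → Y} (hφ : UniformContinuous φ)
    (hequiv : ∀ (t : T) (x : X), φ (t • x) = t • φ x)
    (hfeeble : ∀ U : Set X, IsOpen U → U.Nonempty → (interior (φ '' U)).Nonempty)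
    (hY : Sensitive T Y) : Sensitive T X := by
  obtain ⟨V, hV, hpair⟩ := (sensitive_iff_exists_separated_pair_of_isOpen T Y).mp hY
  refine (sensitive_iff_exists_separated_pair_of_isOpen T X).mpr
    ⟨(fun p : X × X => (φ p.1, φ p.2)) ⁻¹' V, hφ hV, fun U hU hne => ?_⟩
  obtain ⟨y, hy, y', hy', t, ht⟩ := hpair _ isOpen_interior (hfeeble U hU hne)
  obtain ⟨x, hx, rfl⟩ := interior_subset hy
  obtain ⟨x', hx', rfl⟩ := interior_subset hy'
  exact ⟨x, hx, x', hx', t, by simpa only [mem_preimage, hequiv] using ht⟩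

theorem sensitive_of_feebleOpen_factor_general {T X Y : Type*} [Group T]
    [UniformSpace X] [CompactSpace X] [MulAction T X]
    [UniformSpace Y] [MulAction T Y]
    (φ : X → Y) (hcont : Continuous φ)
    (hequiv : ∀ (t : T) (x : X), φ (t • x) = t • φ x)
    (hfeeble : ∀ U : Set X, IsOpen U → U.Nonempty → (interior (φ '' U)).Nonempty)
    (hY : Sensitive T Y) : Sensitive T X :=
  hY.of_feebleOpen (CompactSpace.uniformContinuous_of_continuous hcont) hequiv hfeeble

/-- Let `φ : (X, T) → (Y, T)` be a factor map (continuous, surjective, equivariant)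
of flows on compact Hausdorff spaces which is feeble open (the image of every
nonempty open set has nonempty interior). If `(Y, T)` is sensitive, then `(X, T)`
is sensitive. -/
theorem sensitive_of_feebleOpen_factor {T X Y : Type*} [Group T] [TopologicalSpace T]
    [IsTopologicalGroup T]
    [UniformSpace X] [CompactSpace X] [T2Space X] [MulAction T X] [ContinuousSMul T X]
    [UniformSpace Y] [CompactSpace Y] [T2Space Y] [MulAction T Y] [ContinuousSMul T Y]
    (φ : X → Y) (hcont : Continuous φ) (hsurj : Function.Surjective φ)
    (hequiv : ∀ (t : T) (x : X), φ (t • x) = t • φ x)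
    (hfeeble : ∀ U : Set X, IsOpen U → U.Nonempty → (interior (φ '' U)).Nonempty)
    (hY : Sensitive T Y) : Sensitive T X :=
  sensitive_of_feebleOpen_factor_general φ hcont hequiv hfeeble hY
end

section
/- If (X,T) is a point-transitive flow on a compact Hausdorff space with no isolated points, then (X,T) is either almost equicontinuous (the equicontinuity points are dense) or sensitive; moreover, if it is almost equicontinuous, then the set of equicontinuity points equals the set of transitive points. -/
/-! Translations are uniformly continuous by compactness, so equicontinuity and sensitivity
propagate along orbits. If the transitive point `x₀` is an equicontinuity point, so is its dense
orbit. Otherwise some entourage `V` is sensitive at `x₀`, hence along its orbit, hence, after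
replacing `V` by a `W` with `W ○ W ⊆ V`, on the closure of the orbit, which is everything.
An equicontinuity point `e` in the orbit closure of `x` makes `x` an equicontinuity point, and
an equicontinuity point `x` in the orbit closure of `y` has the orbit of `y` in the closure of its
own; with `y = x₀` and `e` any equicontinuity point this identifies the two sets. -/

open Filter Set Topology Uniformity

/-- `x` is an equicontinuity point of the flow `(X, T)`. -/
def EqPt (T : Type*) {X : Type*} [SMul T X] [UniformSpace X] (x : X) : Prop :=
  ∀ V ∈ 𝓤 X, ∃ U ∈ 𝓤 X, ∀ y : X, (x, y) ∈ U → ∀ t : T, (t • x, t • y) ∈ V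

/-- `x` is a transitive point: its orbit is dense. -/
def TransPt (T : Type*) {X : Type*} [SMul T X] [TopologicalSpace X] (x : X) : Prop :=
  Dense (Set.range fun t : T => t • x)

open MulAction SetRel UniformSpace

def SensitiveAt (T : Type*) {X : Type*} [SMul T X] [UniformSpace X] (V : SetRel X X) (x : X) :
    Prop :=
  ∀ U ∈ 𝓤 X, ∃ y : X, (x, y) ∈ U ∧ ∃ t : T, (t • x, t • y) ∉ V

section SMul

variable {T X : Type*} [SMul T X] [UniformSpace X]

theorem not_eqPt_iff {x : X} : ¬ EqPt T x ↔ ∃ V ∈ 𝓤 X, SensitiveAt T V x := by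
  simp only [EqPt, SensitiveAt]
  push Not
  rfl

theorem SensitiveAt.of_mem_closure {V W : SetRel X X} [W.IsSymm] (hWV : W ○ W ⊆ V) {x : X}
    (hx : x ∈ closure {x' | SensitiveAt T V x'}) : SensitiveAt T W x := by
  intro U hU
  obtain ⟨U₁, hU₁, hU₁U⟩ := comp_mem_uniformity_sets hU
  obtain ⟨x', hxx', hx'⟩ := mem_closure_iff_ball.1 hx hU₁
  obtain ⟨z, hx'z, t, ht⟩ := hx' U₁ hU₁
  -- `t` moves `x'` and `z` more than `V` apart, so it moves `x` `W`-far from one of them.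
  by_cases hc : (t • x, t • x') ∈ W
  · exact ⟨z, hU₁U ⟨x', hxx', hx'z⟩, t, fun hz => ht (hWV ⟨t • x, SetRel.symm W hc, hz⟩)⟩
  · exact ⟨x', hU₁U (subset_comp_self_of_mem_uniformity hU₁ hxx'), t, hc⟩

end SMul

section Group

variable {T X : Type*} [Group T] [MulAction T X] [UniformSpace X]

theorem SensitiveAt.smul {V : SetRel X X} {x : X} {s : T}
    (hs : UniformContinuous (s • · : X → X)) (h : SensitiveAt T V x) :
    SensitiveAt T V (s • x) := by
  intro U hU
  obtain ⟨z, hz, t, ht⟩ := h _ (hs hU)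
  exact ⟨s • z, hz, t * s⁻¹, by simpa [mul_smul] using ht⟩

theorem sensitive_of_not_eqPt (huc : ∀ s : T, UniformContinuous (s • · : X → X)) {x₀ : X}
    (hx₀ : TransPt T x₀) (h : ¬ EqPt T x₀) : Sensitive T X := by
  obtain ⟨V, hV, hx₀V⟩ := not_eqPt_iff.1 h
  obtain ⟨W, hW, _, hWV⟩ := comp_symm_mem_uniformity_sets hV
  have horbit : orbit T x₀ ⊆ {x | SensitiveAt T V x} := by
    rintro _ ⟨s, rfl⟩
    exact hx₀V.smul (huc s)
  exact ⟨W, hW, fun x => SensitiveAt.of_mem_closure hWV (closure_mono horbit (hx₀ x))⟩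

theorem EqPt.of_mem_closure_orbit (huc : ∀ s : T, UniformContinuous (s • · : X → X))
    {e x : X} (he : EqPt T e) (hex : e ∈ closure (orbit T x)) : EqPt T x := by
  intro V hV
  obtain ⟨W, hW, _, hWV⟩ := comp_symm_mem_uniformity_sets hV
  obtain ⟨U, hU, hUe⟩ := he W hW
  obtain ⟨U₁, hU₁, hU₁U⟩ := comp_mem_uniformity_sets hU
  obtain ⟨_, hes, s, rfl⟩ := mem_closure_iff_ball.1 hex hU₁
  refine ⟨_, huc s hU₁, fun y hy t => ?_⟩
  have hx := hUe _ (hU₁U (subset_comp_self_of_mem_uniformity hU₁ hes)) (t * s⁻¹)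
  have hy := hUe _ (hU₁U ⟨_, hes, hy⟩) (t * s⁻¹)
  simp only [smul_smul, inv_mul_cancel_right] at hx hy
  exact hWV ⟨_, SetRel.symm W hx, hy⟩

theorem EqPt.smul (huc : ∀ s : T, UniformContinuous (s • · : X → X)) {x : X} (hx : EqPt T x)
    (s : T) : EqPt T (s • x) :=
  hx.of_mem_closure_orbit huc (by rw [orbit_smul]; exact subset_closure (mem_orbit_self x))

theorem EqPt.orbit_subset_closure_orbit {x y : X} (hx : EqPt T x)
    (hxy : x ∈ closure (orbit T y)) : orbit T y ⊆ closure (orbit T x) := by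
  rintro _ ⟨r, rfl⟩
  refine mem_closure_iff_ball.2 fun {W} hW => ?_
  obtain ⟨U, hU, hUx⟩ := hx _ (symm_le_uniformity hW)
  obtain ⟨_, hxs, s, rfl⟩ := mem_closure_iff_ball.1 hxy hU
  have hr := hUx _ hxs (r * s⁻¹)
  simp only [smul_smul, inv_mul_cancel_right] at hr
  exact ⟨_, hr, r * s⁻¹, rfl⟩

theorem EqPt.transPt {x y : X} (hx : EqPt T x) (hy : TransPt T y) : TransPt T x :=
  dense_closure.1 (hy.mono (hx.orbit_subset_closure_orbit (hy x)))

end Group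

theorem almostEquicont_or_sensitive_general {T X : Type*} [Group T] [TopologicalSpace T]
    [UniformSpace X] [CompactSpace X]
    [MulAction T X] [ContinuousSMul T X]
    (htrans : ∃ x₀ : X, TransPt T x₀) :
    (Dense {x : X | EqPt T x} ∨ Sensitive T X) ∧
      (Dense {x : X | EqPt T x} → {x : X | EqPt T x} = {x : X | TransPt T x}) := by
  have huc (s : T) : UniformContinuous (s • · : X → X) :=
    CompactSpace.uniformContinuous_of_continuous (continuous_const_smul s)
  obtain ⟨x₀, hx₀⟩ := htrans
  refine ⟨?_, fun hdense => ?_⟩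
  · by_cases h : EqPt T x₀
    · exact Or.inl (hx₀.mono (range_subset_iff.2 (h.smul huc)))
    · exact Or.inr (sensitive_of_not_eqPt huc hx₀ h)
  · have : Nonempty X := ⟨x₀⟩
    obtain ⟨e, he⟩ := hdense.nonempty
    ext x
    exact ⟨fun hx => hx.transPt hx₀, fun hx => he.of_mem_closure_orbit huc (hx e)⟩

/-- A point-transitive flow on a compact Hausdorff space with no isolated points is
either almost equicontinuous (the equicontinuity points are dense) or sensitive;
moreover, if it is almost equicontinuous then the equicontinuity points are
exactly the transitive points. -/
theorem almostEquicont_or_sensitive {T X : Type*} [Group T] [TopologicalSpace T]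
    [IsTopologicalGroup T] [UniformSpace X] [CompactSpace X] [T2Space X]
    [MulAction T X] [ContinuousSMul T X]
    (htrans : ∃ x₀ : X, TransPt T x₀)
    (hnoiso : ∀ x : X, Filter.NeBot (nhdsWithin x {x}ᶜ)) :
    (Dense {x : X | EqPt T x} ∨ Sensitive T X) ∧
      (Dense {x : X | EqPt T x} → {x : X | EqPt T x} = {x : X | TransPt T x}) :=
  almostEquicont_or_sensitive_general htrans
end

section
/- For a flow (X,T), a pair (x,y) is syndetically proximal if and only if for every entourage V, the set {t ∈ T : (tx,ty) ∈ V} is thickly syndetic. -/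
open Filter Set Topology Uniformity

/-!
A compact set `K` of continuously acting maps of a compact space is uniformly equicontinuous:
every entourage `V` contains `(k × k)(W)` for all `k ∈ K` and some entourage `W`. Hence
`K` times the (syndetic) return times to `W` lies in the return times to `V`. Conversely,
`K = {1}` shows that thickly syndetic sets are syndetic.
-/

/-- A subset `S` of a topological group `T` is syndetic: `K · S = T` for some
compact `K ⊆ T`. -/
def SyndeticSet {T : Type*} [Mul T] [TopologicalSpace T] (S : Set T) : Prop :=
  ∃ K : Set T, IsCompact K ∧ ∀ t : T, ∃ k ∈ K, ∃ s ∈ S, t = k * s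

/-- A subset `S ⊆ T` is thickly syndetic: for every compact `K ⊆ T` there is a
syndetic set `S_K` with `K · S_K ⊆ S`. -/
def ThicklySyndeticSet {T : Type*} [Mul T] [TopologicalSpace T] (S : Set T) : Prop :=
  ∀ K : Set T, IsCompact K → ∃ S' : Set T, SyndeticSet S' ∧ ∀ k ∈ K, ∀ s ∈ S', k * s ∈ S

/-- `(x, y)` is a syndetically proximal pair. -/
def SyndProxPair (T : Type*) {X : Type*} [Mul T] [TopologicalSpace T] [SMul T X]
    [UniformSpace X] (x y : X) : Prop :=
  ∀ U ∈ 𝓤 X, SyndeticSet {t : T | (t • x, t • y) ∈ U}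

theorem SyndeticSet.mono {T : Type*} [Mul T] [TopologicalSpace T] {S S' : Set T}
    (hS : SyndeticSet S) (hSS' : S ⊆ S') : SyndeticSet S' := by
  obtain ⟨K, hK, hKS⟩ := hS
  refine ⟨K, hK, fun t => ?_⟩
  obtain ⟨k, hk, s, hs, rfl⟩ := hKS t
  exact ⟨k, hk, s, hSS' hs, rfl⟩

theorem ThicklySyndeticSet.syndeticSet {T : Type*} [MulOneClass T] [TopologicalSpace T]
    {S : Set T} (hS : ThicklySyndeticSet S) : SyndeticSet S := by
  obtain ⟨S', hS', hS'S⟩ := hS {1} isCompact_singleton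
  exact hS'.mono fun s hs => by simpa using hS'S 1 rfl s hs

theorem IsCompact.exists_mem_uniformity_forall_smul_mem {T X : Type*} [TopologicalSpace T]
    [UniformSpace X] [CompactSpace X] [SMul T X] [ContinuousSMul T X] {K : Set T}
    (hK : IsCompact K) {V : SetRel X X} (hV : V ∈ 𝓤 X) :
    ∃ W ∈ 𝓤 X, ∀ k ∈ K, ∀ p ∈ W, (k • p.1, k • p.2) ∈ V := by
  have hN : ∀ᶠ q : T × (X × X) in 𝓝ˢ (K ×ˢ diagonal X), (q.1 • q.2.1, q.1 • q.2.2) ∈ V := by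
    refine eventually_nhdsSet_iff_forall.2 ?_
    rintro ⟨k, a, b⟩ ⟨-, rfl : a = b⟩
    have hcont : Continuous fun q : T × (X × X) => (q.1 • q.2.1, q.1 • q.2.2) := by fun_prop
    exact hcont.continuousAt.eventually (nhds_le_uniformity (k • a) hV)
  rw [hK.nhdsSet_prod_eq isCompact_diagonal, nhdsSet_diagonal_eq_uniformity] at hN
  obtain ⟨P, hP, R, hR, hPR⟩ := eventually_prod_iff.1 hN
  exact ⟨{p | R p}, hR, fun k hk p hp => hPR (hP.self_of_nhdsSet k hk) hp⟩

theorem syndProx_iff_thicklySyndetic_general {T X : Type*} [Group T] [TopologicalSpace T]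
    [UniformSpace X] [CompactSpace X]
    [MulAction T X] [ContinuousSMul T X] (x y : X) :
    SyndProxPair T x y ↔
      ∀ V ∈ 𝓤 X, ThicklySyndeticSet {t : T | (t • x, t • y) ∈ V} := by
  refine ⟨fun h V hV K hK => ?_, fun h V hV => (h V hV).syndeticSet⟩
  obtain ⟨W, hW, hWV⟩ := hK.exists_mem_uniformity_forall_smul_mem hV
  exact ⟨_, h W hW, fun k hk s hs => by simpa [mul_smul] using hWV k hk _ hs⟩

/-- For a flow `(X, T)`, a pair `(x, y)` is syndetically proximal if and only if
for every entourage `V` the set of return times `{t : (tx, ty) ∈ V}` is thickly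
syndetic. -/
theorem syndProx_iff_thicklySyndetic {T X : Type*} [Group T] [TopologicalSpace T]
    [IsTopologicalGroup T] [UniformSpace X] [CompactSpace X] [T2Space X]
    [MulAction T X] [ContinuousSMul T X] (x y : X) :
    SyndProxPair T x y ↔
      ∀ V ∈ 𝓤 X, ThicklySyndeticSet {t : T | (t • x, t • y) ∈ V} :=
  syndProx_iff_thicklySyndetic_general x y
end

section
/- If a flow (X,T) is syndetically distal, then the induced flow (E(X),T) on its enveloping semigroup is syndetically distal. -/
open Filter Set Topology Uniformity

theorem SyndProxPair.map {T X Y : Type*} [Mul T] [TopologicalSpace T] [SMul T X] [SMul T Y]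
    [UniformSpace X] [UniformSpace Y] (φ : X →[T] Y) (hφ : UniformContinuous φ) {x y : X}
    (hxy : SyndProxPair T x y) : SyndProxPair T (φ x) (φ y) := by
  intro U hU
  simpa only [Set.mem_preimage, map_smul] using hxy _ (hφ hU)

theorem env_syndeticallyDistal_general {T X : Type*} [Group T] [TopologicalSpace T]
    [UniformSpace X] [MulAction T X]
    (h : ∀ x y : X, SyndProxPair T x y → x = y) :
    ∀ p ∈ envSemigroup T X, ∀ q ∈ envSemigroup T X, SyndProxPair T p q → p = q := by
  intro p _ q _ hpq
  funext x
  exact h _ _ (hpq.map (Pi.evalMulActionHom x) (Pi.uniformContinuous_proj (fun _ : X => X) x))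

/-- If a flow `(X, T)` is syndetically distal (no distinct pair is syndetically
proximal), then the induced flow `(E(X), T)` on its enveloping semigroup
(pointwise uniformity, `T` acting by left composition) is syndetically distal. -/
theorem env_syndeticallyDistal {T X : Type*} [Group T] [TopologicalSpace T]
    [IsTopologicalGroup T] [UniformSpace X] [CompactSpace X] [T2Space X]
    [MulAction T X] [ContinuousSMul T X]
    (h : ∀ x y : X, SyndProxPair T x y → x = y) :
    ∀ p ∈ envSemigroup T X, ∀ q ∈ envSemigroup T X, SyndProxPair T p q → p = q :=
  env_syndeticallyDistal_general h
end
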